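/- arXiv:2601.11265 — 6 statements merged into one kernel-verified Lean document; each statement's English description precedes it below -/
import Mathlib

section
/- Let X be a countable set, n a positive integer, θ ∈ (0, 1/2), and S = ((x_1,y_1),…,(x_n,y_n)) a sequence in (X × {−1,+1})^n. Set α = (1/2)·ln((1/2+θ)/(1/2−θ)). Define weights D_{1,i} = 1/n for i ∈ [n], and suppose that for r = 1,…,R there are classifiers h_r : X → {−1,+1} with weighted error ∑_{i : h_r(x_i) ≠ y_i} D_{r,i} ≤ 1/2 − θ, where the weights are updated by D_{r+1,i} = D_{r,i}·exp(−α·y_i·h_r(x_i)) / Z_r with Z_r = ∑_{i=1}^n D_{r,i}·exp(−α·y_i·h_r(x_i)). Then for every integer R ≥ ⌈ln(2n)/θ²⌉, the function h = (1/R)·∑_{r=1}^R h_r satisfies y_i·h(x_i) > θ/2 for every i ∈ [n]; equivalently, the (θ/2)-margin loss of h on S is zero. -/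
/-!
The weights telescope: `D (R+1) i * ∏ Z r = (1/n) * exp (-α * y i * ∑ h r (x i))`, and
`D (R+1) i ≤ 1` because every `D r` is a probability vector. Each normaliser is
`Z r = (1 - ε_r) e^{-α} + ε_r e^{α} ≤ (1/2 + θ) e^{-α} + (1/2 - θ) e^{α} = √(1 - 4θ²)` for the chosen `α`,
so `exp (-α * margin) ≤ n (1 - 4θ²)^{R/2}`. After taking logarithms it remains to show
`log (1 - 4θ²) / 2 + θα/2 ≤ -θ²`, which holds term by term in the power series in `2θ`,
together with `R θ² ≥ log (2n) > log n`.
-/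

open Real Finset

/- With `x = 2θ` the left side is `∑ₖ (1/(4(2k+1)) - 1/(2(k+1))) x^(2k+2)`: its `k = 0` term is
`-θ²` and all other terms are `≤ 0`. -/
theorem log_one_sub_four_mul_sq_add_le {θ : ℝ} (hθ : |θ| < 1 / 2) :
    log (1 - 4 * θ ^ 2) / 2 + θ / 4 * log ((1 / 2 + θ) / (1 / 2 - θ)) ≤ -θ ^ 2 := by
  obtain ⟨x, rfl⟩ : ∃ x, θ = x / 2 := ⟨2 * θ, by ring⟩
  have hx : |x| < 1 := by rw [abs_div, abs_two] at hθ; linarith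
  have hx2 : |x ^ 2| < 1 := by rw [abs_pow]; exact pow_lt_one₀ (abs_nonneg x) hx two_ne_zero
  have hsum : HasSum (fun k : ℕ => -(1 / 2) * ((x ^ 2) ^ (k + 1) / (k + 1))
      + x / 8 * (2 * (1 / (2 * k + 1)) * x ^ (2 * k + 1)))
      (log (1 - 4 * (x / 2) ^ 2) / 2 + x / 2 / 4 * log ((1 / 2 + x / 2) / (1 / 2 - x / 2))) := by
    have h1 : (0 : ℝ) < 1 + x := by linarith [neg_abs_le x]
    have h2 : (0 : ℝ) < 1 - x := by linarith [le_abs_self x]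
    have hlog : log ((1 / 2 + x / 2) / (1 / 2 - x / 2)) = log (1 + x) - log (1 - x) := by
      rw [← log_div h1.ne' h2.ne']; congr 1; field_simp
    rw [hlog, show 1 - 4 * (x / 2) ^ 2 = 1 - x ^ 2 by ring]
    have h := ((hasSum_pow_div_log_of_abs_lt_one hx2).mul_left (-(1 / 2))).add
      ((hasSum_log_sub_log_of_abs_lt_one hx).mul_left (x / 8))
    rwa [show -(1 / 2) * -log (1 - x ^ 2) + x / 8 * (log (1 + x) - log (1 - x))
      = log (1 - x ^ 2) / 2 + x / 2 / 4 * (log (1 + x) - log (1 - x)) by ring] at h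
  refine hasSum_le (fun k => ?_) hsum (hasSum_ite_eq 0 _)
  have hpow : x * x ^ (2 * k + 1) = (x ^ 2) ^ (k + 1) := by ring
  rcases Nat.eq_zero_or_pos k with rfl | hk
  · exact le_of_eq (by simp only [if_true]; push_cast; ring)
  · rw [if_neg hk.ne']
    have hk' : (1 : ℝ) ≤ k := by exact_mod_cast hk
    have hcoef : 1 / (4 * (2 * k + 1)) ≤ (1 : ℝ) / (2 * (k + 1)) :=
      one_div_le_one_div_of_le (by positivity) (by linarith)
    calc -(1 / 2) * ((x ^ 2) ^ (k + 1) / (k + 1))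
          + x / 8 * (2 * (1 / (2 * k + 1)) * x ^ (2 * k + 1))
        = (x ^ 2) ^ (k + 1) * (1 / (4 * (2 * k + 1)) - 1 / (2 * (k + 1))) := by
          rw [← hpow]; field_simp; ring
      _ ≤ 0 := mul_nonpos_of_nonneg_of_nonpos (by positivity) (by linarith)

theorem add_mul_exp_neg_eq_sqrt {θ α : ℝ} (hθ : |θ| < 1 / 2)
    (hα : α = 1 / 2 * log ((1 / 2 + θ) / (1 / 2 - θ))) :
    (1 / 2 + θ) * exp (-α) + (1 / 2 - θ) * exp α = √(1 - 4 * θ ^ 2) := by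
  have hp : 0 < 1 / 2 + θ := by linarith [neg_abs_le θ]
  have hq : 0 < 1 / 2 - θ := by linarith [le_abs_self θ]
  have hexp : exp α ^ 2 * (1 - 2 * θ) = 1 + 2 * θ := by
    rw [← exp_nat_mul, hα, ← mul_assoc, show ((2 : ℕ) : ℝ) * (1 / 2) = 1 by norm_num, one_mul,
      exp_log (div_pos hp hq), div_mul_eq_mul_div, div_eq_iff hq.ne']
    ring
  rw [eq_comm, sqrt_eq_iff_mul_self_eq_of_pos (by positivity), exp_neg]
  field_simp
  linear_combination (exp α ^ 2 * (1 - 2 * θ) - (1 + 2 * θ)) * hexp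

theorem sum_mul_exp_neg_mul_le {ι : Type*} [Fintype ι] {d y p : ι → ℝ} {α ε : ℝ}
    (hd : d ∈ stdSimplex ℝ ι) (hy : ∀ i, y i = 1 ∨ y i = -1) (hp : ∀ i, p i = 1 ∨ p i = -1)
    (hα : 0 ≤ α) (herr : ∑ i with p i ≠ y i, d i ≤ ε) :
    ∑ i, d i * exp (-α * y i * p i) ≤ (1 - ε) * exp (-α) + ε * exp α := by
  have hterm : ∀ i, exp (-α * y i * p i) = if p i ≠ y i then exp α else exp (-α) := by
    intro i
    rcases hy i with hyi | hyi <;> rcases hp i with hpi | hpi <;> norm_num [hyi, hpi]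
  have hsplit : ∑ i with p i ≠ y i, d i + ∑ i with ¬p i ≠ y i, d i = 1 := by
    rw [sum_filter_add_sum_filter_not]; exact hd.2
  have hmono : exp (-α) ≤ exp α := exp_le_exp.2 (by linarith)
  calc ∑ i, d i * exp (-α * y i * p i)
      = (∑ i with p i ≠ y i, d i) * exp α + (∑ i with ¬p i ≠ y i, d i) * exp (-α) := by
        simp only [hterm, mul_ite, sum_ite, sum_mul]
    _ = exp (-α) + (∑ i with p i ≠ y i, d i) * (exp α - exp (-α)) := by
        linear_combination exp (-α) * hsplit
    _ ≤ exp (-α) + ε * (exp α - exp (-α)) := by gcongr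
    _ = (1 - ε) * exp (-α) + ε * exp α := by ring

section Reweighting

variable {ι : Type*} {D w : ℕ → ι → ℝ} {Z : ℕ → ℝ}

theorem mul_prod_eq_mul_prod {R : ℕ} (hZ : ∀ r, 1 ≤ r → r ≤ R → Z r ≠ 0)
    (hupd : ∀ r, 1 ≤ r → r ≤ R → ∀ i, D (r + 1) i = D r i * w r i / Z r) (i : ι) :
    D (R + 1) i * ∏ r ∈ Icc 1 R, Z r = D 1 i * ∏ r ∈ Icc 1 R, w r i := by
  induction R with
  | zero => simp
  | succ R ih =>
    rw [prod_Icc_succ_top (by omega), prod_Icc_succ_top (by omega), ← mul_assoc (D 1 i),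
      ← ih (fun r h1 h2 => hZ r h1 (by omega)) (fun r h1 h2 => hupd r h1 (by omega)),
      hupd (R + 1) (by omega) le_rfl]
    field_simp [hZ (R + 1) (by omega) le_rfl]

variable [Fintype ι]

theorem sum_mul_pos_of_mem_stdSimplex {d v : ι → ℝ} (hd : d ∈ stdSimplex ℝ ι)
    (hv : ∀ i, 0 < v i) : 0 < ∑ i, d i * v i := by
  obtain ⟨j, -, hj⟩ : ∃ j ∈ univ, 0 < d j := exists_lt_of_sum_lt (by simp [hd.2])
  exact sum_pos' (fun i _ => mul_nonneg (hd.1 i) (hv i).le) ⟨j, mem_univ j, mul_pos hj (hv j)⟩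

theorem reweight_mem_stdSimplex {d v : ι → ℝ} (hd : d ∈ stdSimplex ℝ ι) (hv : ∀ i, 0 < v i) :
    (fun i => d i * v i / ∑ j, d j * v j) ∈ stdSimplex ℝ ι := by
  have hpos := sum_mul_pos_of_mem_stdSimplex hd hv
  exact ⟨fun i => div_nonneg (mul_nonneg (hd.1 i) (hv i).le) hpos.le,
    by rw [← sum_div, div_self hpos.ne']⟩

theorem mem_stdSimplex_of_reweight {R : ℕ} (hD1 : D 1 ∈ stdSimplex ℝ ι) (hw : ∀ r i, 0 < w r i)
    (hZ : ∀ r, 1 ≤ r → r ≤ R → Z r = ∑ i, D r i * w r i)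
    (hupd : ∀ r, 1 ≤ r → r ≤ R → ∀ i, D (r + 1) i = D r i * w r i / Z r) :
    ∀ r, 1 ≤ r → r ≤ R + 1 → D r ∈ stdSimplex ℝ ι := by
  intro r hr
  induction r, hr using Nat.le_induction with
  | base => exact fun _ => hD1
  | succ r hr ih =>
    intro hrR
    have hnext : D (r + 1) = fun i => D r i * w r i / ∑ j, D r j * w r j := by
      ext i; rw [hupd r hr (by omega) i, hZ r hr (by omega)]
    exact hnext ▸ reweight_mem_stdSimplex (ih (by omega)) (hw r)

theorem mul_prod_le_pow {R : ℕ} {c : ℝ} (hD1 : D 1 ∈ stdSimplex ℝ ι) (hw : ∀ r i, 0 < w r i)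
    (hZ : ∀ r, 1 ≤ r → r ≤ R → Z r = ∑ i, D r i * w r i)
    (hupd : ∀ r, 1 ≤ r → r ≤ R → ∀ i, D (r + 1) i = D r i * w r i / Z r)
    (hZc : ∀ r, 1 ≤ r → r ≤ R → Z r ≤ c) (i : ι) :
    D 1 i * ∏ r ∈ Icc 1 R, w r i ≤ c ^ R := by
  have hD := mem_stdSimplex_of_reweight hD1 hw hZ hupd
  have hZpos : ∀ r ∈ Icc 1 R, 0 < Z r := fun r hr => by
    obtain ⟨h1, h2⟩ := mem_Icc.1 hr
    exact hZ r h1 h2 ▸ sum_mul_pos_of_mem_stdSimplex (hD r h1 (by omega)) (hw r)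
  calc D 1 i * ∏ r ∈ Icc 1 R, w r i
      = D (R + 1) i * ∏ r ∈ Icc 1 R, Z r :=
        (mul_prod_eq_mul_prod (fun r h1 h2 => (hZpos r (mem_Icc.2 ⟨h1, h2⟩)).ne') hupd i).symm
    _ ≤ 1 * ∏ r ∈ Icc 1 R, c := by
        refine mul_le_mul (mem_Icc_of_mem_stdSimplex (hD (R + 1) (by omega) le_rfl) i).2
          (prod_le_prod (fun r hr => (hZpos r hr).le) fun r hr => ?_)
          (prod_nonneg fun r hr => (hZpos r hr).le) zero_le_one
        exact hZc r (mem_Icc.1 hr).1 (mem_Icc.1 hr).2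
    _ = c ^ R := by simp

end Reweighting

theorem half_log_div_pos {θ : ℝ} (hθ : θ ∈ Set.Ioo (0 : ℝ) (1 / 2)) :
    0 < 1 / 2 * log ((1 / 2 + θ) / (1 / 2 - θ)) :=
  mul_pos one_half_pos (log_pos ((one_lt_div (by linarith [hθ.2])).2 (by linarith [hθ.1])))

theorem lt_of_exp_neg_mul_le {n R : ℕ} (hn : 0 < n) {θ α m : ℝ} (hθ : θ ∈ Set.Ioo (0 : ℝ) (1 / 2))
    (hα : α = 1 / 2 * log ((1 / 2 + θ) / (1 / 2 - θ))) (hR : log (2 * n) / θ ^ 2 ≤ R)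
    (hm : exp (-α * m) ≤ n * √(1 - 4 * θ ^ 2) ^ R) :
    θ * R / 2 < m := by
  have hn' : (0 : ℝ) < n := by exact_mod_cast hn
  have hs : 0 < 1 - 4 * θ ^ 2 := by nlinarith [hθ.1, hθ.2]
  have hα0 : 0 < α := hα ▸ half_log_div_pos hθ
  have hlogm : -α * m ≤ log n + R * (log (1 - 4 * θ ^ 2) / 2) := by
    have := log_le_log (exp_pos _) hm
    rwa [log_exp, log_mul hn'.ne' (by positivity), log_pow, log_sqrt hs.le] at this
  have hkey := mul_le_mul_of_nonneg_left
    (log_one_sub_four_mul_sq_add_le (abs_lt.2 ⟨by linarith [hθ.1], hθ.2⟩)) (Nat.cast_nonneg R)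
  have hRθ : log 2 + log n ≤ R * θ ^ 2 := by
    rwa [div_le_iff₀ (pow_pos hθ.1 2), log_mul two_ne_zero hn'.ne'] at hR
  have hlog2 : 0 < log 2 := log_pos one_lt_two
  rw [show log ((1 / 2 + θ) / (1 / 2 - θ)) = 2 * α by linarith] at hkey
  have : α * (θ * R / 2) < α * m := by linarith
  exact lt_of_mul_lt_mul_left this hα0.le

theorem adaboost_margin_general {X : Type*} (n : ℕ) (hn : 0 < n)
    (θ : ℝ) (hθ : θ ∈ Set.Ioo (0 : ℝ) (1 / 2))
    (x : Fin n → X) (y : Fin n → ℝ) (hy : ∀ i, y i = 1 ∨ y i = -1)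
    (α : ℝ) (hα : α = (1 / 2) * Real.log ((1 / 2 + θ) / (1 / 2 - θ)))
    (R : ℕ) (hR : ⌈Real.log (2 * n) / θ ^ 2⌉₊ ≤ R)
    (h : ℕ → X → ℝ) (hpm : ∀ r, 1 ≤ r → r ≤ R → ∀ x', h r x' = 1 ∨ h r x' = -1)
    (D : ℕ → Fin n → ℝ) (Z : ℕ → ℝ)
    (hD1 : ∀ i, D 1 i = 1 / n)
    (hZ : ∀ r, 1 ≤ r → r ≤ R →
      Z r = ∑ i, D r i * Real.exp (-α * y i * h r (x i)))
    (hupd : ∀ r, 1 ≤ r → r ≤ R → ∀ i,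
      D (r + 1) i = D r i * Real.exp (-α * y i * h r (x i)) / Z r)
    (hweak : ∀ r, 1 ≤ r → r ≤ R →
      ∑ i ∈ Finset.univ.filter (fun i => h r (x i) ≠ y i), D r i ≤ 1 / 2 - θ) :
    ∀ i, y i * ((1 / R : ℝ) * ∑ r ∈ Finset.Icc 1 R, h r (x i)) > θ / 2 := by
  have hθ' : |θ| < 1 / 2 := abs_lt.2 ⟨by linarith [hθ.1], hθ.2⟩
  have hα0 : 0 ≤ α := hα ▸ (half_log_div_pos hθ).le
  have hn' : (0 : ℝ) < n := by exact_mod_cast hn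
  have hD1' : D 1 ∈ stdSimplex ℝ (Fin n) :=
    ⟨fun i => by rw [hD1]; positivity, by simp [hD1, hn'.ne']⟩
  have hw : ∀ r i, 0 < exp (-α * y i * h r (x i)) := fun r i => exp_pos _
  have hZle : ∀ r, 1 ≤ r → r ≤ R → Z r ≤ √(1 - 4 * θ ^ 2) := fun r h1 h2 => by
    rw [hZ r h1 h2, ← add_mul_exp_neg_eq_sqrt hθ' hα, show 1 / 2 + θ = 1 - (1 / 2 - θ) by ring]
    exact sum_mul_exp_neg_mul_le (mem_stdSimplex_of_reweight hD1' hw hZ hupd r h1 (by omega))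
      hy (fun i => hpm r h1 h2 (x i)) hα0 (hweak r h1 h2)
  intro i
  have hexp := mul_prod_le_pow hD1' hw hZ hupd hZle i
  rw [hD1, ← exp_sum, ← mul_sum, div_mul_eq_mul_div, one_mul, div_le_iff₀' hn'] at hexp
  have hm := lt_of_exp_neg_mul_le hn hθ hα (Nat.ceil_le.1 hR) (m := y i * ∑ r ∈ Icc 1 R, h r (x i))
    (by simpa only [mul_assoc, mul_sum] using hexp)
  have hR0 : (0 : ℝ) < R := by
    rcases Nat.eq_zero_or_pos R with rfl | hpos
    · simp at hm
    · exact_mod_cast hpos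
  rw [gt_iff_lt, mul_left_comm, one_div_mul_eq_div, lt_div_iff₀ hR0]
  linarith

/-- **AdaBoost with equal weighting achieves large margins.**
If for `R ≥ ⌈ln(2n)/θ²⌉` rounds the weak hypotheses `h r` each have weighted error
at most `1/2 - θ` under the exponentially updated distributions `D r`, then the
average `(1/R)·∑ h r` has margin strictly larger than `θ/2` on every training example
(equivalently, zero `(θ/2)`-margin loss on `S`). -/
theorem adaboost_margin {X : Type*} [Countable X] (n : ℕ) (hn : 0 < n)
    (θ : ℝ) (hθ : θ ∈ Set.Ioo (0 : ℝ) (1 / 2))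
    (x : Fin n → X) (y : Fin n → ℝ) (hy : ∀ i, y i = 1 ∨ y i = -1)
    (α : ℝ) (hα : α = (1 / 2) * Real.log ((1 / 2 + θ) / (1 / 2 - θ)))
    (R : ℕ) (hR : ⌈Real.log (2 * n) / θ ^ 2⌉₊ ≤ R)
    (h : ℕ → X → ℝ) (hpm : ∀ r, 1 ≤ r → r ≤ R → ∀ x', h r x' = 1 ∨ h r x' = -1)
    (D : ℕ → Fin n → ℝ) (Z : ℕ → ℝ)
    (hD1 : ∀ i, D 1 i = 1 / n)
    (hZ : ∀ r, 1 ≤ r → r ≤ R →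
      Z r = ∑ i, D r i * Real.exp (-α * y i * h r (x i)))
    (hupd : ∀ r, 1 ≤ r → r ≤ R → ∀ i,
      D (r + 1) i = D r i * Real.exp (-α * y i * h r (x i)) / Z r)
    (hweak : ∀ r, 1 ≤ r → r ≤ R →
      ∑ i ∈ Finset.univ.filter (fun i => h r (x i) ≠ y i), D r i ≤ 1 / 2 - θ) :
    ∀ i, y i * ((1 / R : ℝ) * ∑ r ∈ Finset.Icc 1 R, h r (x i)) > θ / 2 :=
  adaboost_margin_general n hn θ hθ x y hy α hα R hR h hpm D Z hD1 hZ hupd hweak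
end

section
/- Let X be a set, n and R positive integers, θ ∈ (0, 1/2), α > 0, and S = ((x_1,y_1),…,(x_n,y_n)) a sequence in (X × {−1,+1})^n. Let h_1,…,h_R : X → {−1,+1} be arbitrary, define weights D_{1,i} = 1/n and D_{r+1,i} = D_{r,i}·exp(−α·y_i·h_r(x_i)) / Z_r where Z_r = ∑_{i=1}^n D_{r,i}·exp(−α·y_i·h_r(x_i)). Then the (θ/2)-margin loss of h = (1/R)·∑_{r=1}^R h_r on S satisfies L_S^{θ/2}(h) ≤ exp(θ·R·α/2) · ∏_{r=1}^R Z_r. -/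
open scoped Classical

/-- **Markov plus telescoping step in the AdaBoost analysis.**
For arbitrary ±1-valued hypotheses `h 1, …, h R` and the exponentially updated
distributions `D r` with normalizers `Z r`, the `(θ/2)`-margin loss of the average
`(1/R)·∑ h r` on the sample is at most `exp(θ·R·α/2) · ∏ Z r`. -/
theorem adaboost_margin_loss_le {X : Type*} (n R : ℕ) (hn : 0 < n) (hRpos : 0 < R)
    (θ : ℝ) (hθ : θ ∈ Set.Ioo (0 : ℝ) (1 / 2)) (α : ℝ) (hα : 0 < α)
    (x : Fin n → X) (y : Fin n → ℝ) (hy : ∀ i, y i = 1 ∨ y i = -1)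
    (h : ℕ → X → ℝ) (hpm : ∀ r, 1 ≤ r → r ≤ R → ∀ x', h r x' = 1 ∨ h r x' = -1)
    (D : ℕ → Fin n → ℝ) (Z : ℕ → ℝ)
    (hD1 : ∀ i, D 1 i = 1 / n)
    (hZ : ∀ r, 1 ≤ r → r ≤ R →
      Z r = ∑ i, D r i * Real.exp (-α * y i * h r (x i)))
    (hupd : ∀ r, 1 ≤ r → r ≤ R → ∀ i,
      D (r + 1) i = D r i * Real.exp (-α * y i * h r (x i)) / Z r) :
    ((Finset.univ.filter
        (fun i => y i * ((1 / R : ℝ) * ∑ r ∈ Finset.Icc 1 R, h r (x i)) ≤ θ / 2)).card : ℝ) / n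
      ≤ Real.exp (θ * R * α / 2) * ∏ r ∈ Finset.Icc 1 R, Z r := by
  obtain ⟨hθ0, hθhalf⟩ := hθ
  have hnR : (0:ℝ) < n := by exact_mod_cast hn
  have hRR : (0:ℝ) < R := by exact_mod_cast hRpos
  have hne : (Finset.univ : Finset (Fin n)).Nonempty := ⟨⟨0, hn⟩, Finset.mem_univ _⟩
  -- key induction
  have key : ∀ m, m ≤ R →
      (0 < ∏ r ∈ Finset.Icc 1 m, Z r)
      ∧ (∀ i, D (m+1) i =
          (1 / n) * Real.exp (-α * y i * ∑ r ∈ Finset.Icc 1 m, h r (x i))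
            / ∏ r ∈ Finset.Icc 1 m, Z r)
      ∧ (∀ i, 0 < D (m+1) i) ∧ (∑ i, D (m+1) i = 1) := by
    intro m
    induction m with
    | zero =>
      intro _
      refine ⟨by simp, ?_, ?_, ?_⟩
      · intro i; simp [hD1]
      · intro i; rw [hD1]; positivity
      · simp [hD1]
        field_simp
    | succ m ih =>
      intro hm
      obtain ⟨hprod, hform, hpos, hsum⟩ := ih (le_of_lt (Nat.lt_of_succ_le hm))
      have h1 : 1 ≤ m+1 := Nat.succ_le_succ (Nat.zero_le m)
      have hZpos : 0 < Z (m+1) := by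
        rw [hZ (m+1) h1 hm]
        exact Finset.sum_pos (fun i _ => mul_pos (hpos i) (Real.exp_pos _)) hne
      have hprod' : 0 < ∏ r ∈ Finset.Icc 1 (m+1), Z r := by
        rw [Finset.prod_Icc_succ_top h1]
        exact mul_pos hprod hZpos
      refine ⟨hprod', ?_, ?_, ?_⟩
      · intro i
        rw [hupd (m+1) h1 hm i, hform i, Finset.sum_Icc_succ_top h1,
          Finset.prod_Icc_succ_top h1,
          show -α * y i * ((∑ r ∈ Finset.Icc 1 m, h r (x i)) + h (m+1) (x i))
            = (-α * y i * ∑ r ∈ Finset.Icc 1 m, h r (x i)) + (-α * y i * h (m+1) (x i))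
            from by ring, Real.exp_add]
        field_simp
      · intro i
        rw [hupd (m+1) h1 hm i]
        exact div_pos (mul_pos (hpos i) (Real.exp_pos _)) hZpos
      · have : ∑ i, D (m+1+1) i
            = (∑ i, D (m+1) i * Real.exp (-α * y i * h (m+1) (x i))) / Z (m+1) := by
          rw [Finset.sum_div]
          exact Finset.sum_congr rfl fun i _ => hupd (m+1) h1 hm i
        rw [this, ← hZ (m+1) h1 hm, div_self (ne_of_gt hZpos)]
  obtain ⟨hPpos, hform, hpos, hsum⟩ := key R le_rfl
  set P := ∏ r ∈ Finset.Icc 1 R, Z r with hPdef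
  set E : Fin n → ℝ := fun i => Real.exp (-α * y i * ∑ r ∈ Finset.Icc 1 R, h r (x i)) with hE
  have hEsum : ∑ i, E i = n * P := by
    have h2 : (∑ i, E i) * ((1/(n:ℝ))/P) = 1 := by
      have h2' : (∑ i, E i) * ((1/(n:ℝ))/P) = ∑ i, D (R+1) i := by
        rw [Finset.sum_mul]
        refine Finset.sum_congr rfl fun i _ => ?_
        simp only [hE]
        rw [hform i]; ring
      rw [h2', hsum]
    have hP0 : P ≠ 0 := ne_of_gt hPpos
    have hn0 : (n:ℝ) ≠ 0 := ne_of_gt hnR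
    field_simp at h2
    linarith
  -- Markov step
  set T := Finset.univ.filter
      (fun i => y i * ((1 / R : ℝ) * ∑ r ∈ Finset.Icc 1 R, h r (x i)) ≤ θ / 2) with hT
  have hMarkov : (T.card : ℝ) * Real.exp (-(θ * R * α / 2)) ≤ ∑ i, E i := by
    calc (T.card : ℝ) * Real.exp (-(θ * R * α / 2))
        = ∑ _i ∈ T, Real.exp (-(θ * R * α / 2)) := by
          rw [Finset.sum_const, nsmul_eq_mul]
      _ ≤ ∑ i ∈ T, E i := by
          apply Finset.sum_le_sum
          intro i hi
          rw [hT, Finset.mem_filter] at hi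
          simp only [hE]
          apply Real.exp_le_exp.mpr
          have hS := hi.2
          have h3 : α * R * (y i * ((1/R : ℝ) * ∑ r ∈ Finset.Icc 1 R, h r (x i)))
              ≤ α * R * (θ/2) := mul_le_mul_of_nonneg_left hS (by positivity)
          have h4 : α * R * (y i * ((1/R : ℝ) * ∑ r ∈ Finset.Icc 1 R, h r (x i)))
              = α * (y i * ∑ r ∈ Finset.Icc 1 R, h r (x i)) := by
            field_simp
          rw [h4] at h3
          linarith
      _ ≤ ∑ i, E i := Finset.sum_le_sum_of_subset_of_nonneg (Finset.filter_subset _ _)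
          (fun i _ _ => le_of_lt (Real.exp_pos _))
  rw [hEsum] at hMarkov
  rw [div_le_iff₀ hnR]
  have hexp : Real.exp (-(θ * R * α / 2)) > 0 := Real.exp_pos _
  have := mul_le_mul_of_nonneg_right hMarkov (le_of_lt (Real.exp_pos (θ * R * α / 2)))
  rw [mul_assoc, ← Real.exp_add, neg_add_cancel, Real.exp_zero, mul_one] at this
  calc (T.card : ℝ) ≤ n * P * Real.exp (θ * R * α / 2) := this
    _ = Real.exp (θ * R * α / 2) * P * n := by ring
end

section
/- Let θ ∈ [0, 1/2) and set α = (1/2)·ln((1/2+θ)/(1/2−θ)). Let n be a positive integer, let D_1,…,D_n be nonnegative reals with ∑_{i=1}^n D_i = 1, and let ε_1,…,ε_n ∈ {−1,+1} satisfy ∑_{i : ε_i = −1} D_i ≤ 1/2 − θ. Then ∑_{i=1}^n D_i·exp(−α·ε_i) ≤ exp(−α) + (exp(α) − exp(−α))·(1/2 − θ) = 2·√((1/2 − θ)·(1/2 + θ)). -/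
open scoped Classical

/-!
Since `ε i = ±1`, the map `ε ↦ exp (-α ε)` is affine on `{1, -1}`, so for weights summing to one
the normalizer is exactly `exp (-α) + (exp α - exp (-α)) · err`, which is monotone in the weighted
error `err` as soon as `α ≥ 0`. The choice of `α` makes `exp α = √((1/2 + θ) / (1/2 - θ))`, and the
bound at `err = 1/2 - θ` then simplifies to `2 √((1/2 - θ)(1/2 + θ))`.
-/

open Finset Real

lemma exp_neg_mul_of_eq_one_or_eq_neg_one {α ε : ℝ} (hε : ε = 1 ∨ ε = -1) :
    exp (-α * ε) = exp (-α) + (exp α - exp (-α)) * if ε = -1 then 1 else 0 := by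
  rcases hε with rfl | rfl <;> norm_num

lemma sum_mul_exp_neg_mul_of_sign {ι : Type*} (s : Finset ι) (α : ℝ) (D ε : ι → ℝ)
    (hε : ∀ i ∈ s, ε i = 1 ∨ ε i = -1) :
    ∑ i ∈ s, D i * exp (-α * ε i)
      = exp (-α) * ∑ i ∈ s, D i + (exp α - exp (-α)) * ∑ i ∈ s.filter (ε · = -1), D i := by
  rw [sum_filter, mul_sum, mul_sum, ← sum_add_distrib]
  refine sum_congr rfl fun i hi => ?_
  rw [exp_neg_mul_of_eq_one_or_eq_neg_one (hε i hi)]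
  split_ifs <;> ring

lemma sum_mul_exp_neg_mul_le_s2 {ι : Type*} (s : Finset ι) {α w : ℝ} (hα : 0 ≤ α) (D ε : ι → ℝ)
    (hε : ∀ i ∈ s, ε i = 1 ∨ ε i = -1) (hD : ∑ i ∈ s, D i = 1)
    (herr : ∑ i ∈ s.filter (ε · = -1), D i ≤ w) :
    ∑ i ∈ s, D i * exp (-α * ε i) ≤ exp (-α) + (exp α - exp (-α)) * w := by
  have hgap : 0 ≤ exp α - exp (-α) := sub_nonneg.2 (exp_le_exp.2 (by linarith))
  rw [sum_mul_exp_neg_mul_of_sign s α D ε hε, hD, mul_one]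
  gcongr

lemma exp_half_mul_log {x : ℝ} (hx : 0 < x) : exp (1 / 2 * log x) = √x := by
  rw [one_div_mul_eq_div, exp_half, exp_log hx]

lemma inv_add_sub_inv_mul_sqrt_div {p q : ℝ} (hp : 0 < p) (hq : 0 < q) (hpq : p + q = 1) :
    (√(q / p))⁻¹ + (√(q / p) - (√(q / p))⁻¹) * p = 2 * √(p * q) := by
  have : 0 < √p := sqrt_pos.2 hp
  have : 0 < √q := sqrt_pos.2 hq
  rw [sqrt_div hq.le, sqrt_mul hp.le]
  field_simp
  rw [sq_sqrt hp.le, sq_sqrt hq.le]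
  linear_combination (-p) * hpq

theorem normalizer_bound_general (θ : ℝ) (hθ0 : 0 ≤ θ) (hθ : θ < 1 / 2)
    (α : ℝ) (hα : α = (1 / 2) * Real.log ((1 / 2 + θ) / (1 / 2 - θ)))
    (n : ℕ)
    (D : Fin n → ℝ) (hD1 : ∑ i, D i = 1)
    (ε : Fin n → ℝ) (hε : ∀ i, ε i = 1 ∨ ε i = -1)
    (herr : ∑ i ∈ Finset.univ.filter (fun i => ε i = -1), D i ≤ 1 / 2 - θ) :
    (∑ i, D i * Real.exp (-α * ε i)
        ≤ Real.exp (-α) + (Real.exp α - Real.exp (-α)) * (1 / 2 - θ)) ∧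
      Real.exp (-α) + (Real.exp α - Real.exp (-α)) * (1 / 2 - θ)
        = 2 * Real.sqrt ((1 / 2 - θ) * (1 / 2 + θ)) := by
  have hp : (0 : ℝ) < 1 / 2 - θ := by linarith
  have hq : (0 : ℝ) < 1 / 2 + θ := by linarith
  have hα0 : 0 ≤ α := by
    rw [hα]
    exact mul_nonneg (by norm_num) (log_nonneg ((one_le_div hp).2 (by linarith)))
  refine ⟨sum_mul_exp_neg_mul_le_s2 _ hα0 D ε (fun i _ => hε i) hD1 herr, ?_⟩
  rw [exp_neg, hα, exp_half_mul_log (div_pos hq hp)]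
  exact inv_add_sub_inv_mul_sqrt_div hp hq (by ring)

/-- **Bound on the AdaBoost normalization factor.**
If the weighted error `∑_{i : ε i = -1} D i` is at most `1/2 - θ` and
`α = (1/2)·ln((1/2+θ)/(1/2-θ))`, then
`∑ D i · exp(-α·ε i) ≤ exp(-α) + (exp α - exp(-α))·(1/2-θ) = 2·√((1/2-θ)(1/2+θ))`. -/
theorem normalizer_bound (θ : ℝ) (hθ0 : 0 ≤ θ) (hθ : θ < 1 / 2)
    (α : ℝ) (hα : α = (1 / 2) * Real.log ((1 / 2 + θ) / (1 / 2 - θ)))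
    (n : ℕ) (hn : 0 < n)
    (D : Fin n → ℝ) (hD0 : ∀ i, 0 ≤ D i) (hD1 : ∑ i, D i = 1)
    (ε : Fin n → ℝ) (hε : ∀ i, ε i = 1 ∨ ε i = -1)
    (herr : ∑ i ∈ Finset.univ.filter (fun i => ε i = -1), D i ≤ 1 / 2 - θ) :
    (∑ i, D i * Real.exp (-α * ε i)
        ≤ Real.exp (-α) + (Real.exp α - Real.exp (-α)) * (1 / 2 - θ)) ∧
      Real.exp (-α) + (Real.exp α - Real.exp (-α)) * (1 / 2 - θ)
        = 2 * Real.sqrt ((1 / 2 - θ) * (1 / 2 + θ)) :=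
  normalizer_bound_general θ hθ0 hθ α hα n D hD1 ε hε herr
end

section
/- For every real x with 0 ≤ x < 1/2, it holds that 2·(1/2 + x)^{1/2 + x/4}·(1/2 − x)^{1/2 − x/4} ≤ 1 − x². Equivalently, ln(2·(1/2 + x)^{1/2 + x/4}·(1/2 − x)^{1/2 − x/4}) ≤ ln(1 − x²). -/
/-! Taking logarithms, the claim says `perRoundGap x ≥ 0`, and `perRoundGap 0 = 0`. The derivative
of `perRoundGap` is nonnegative on `[0, 1/2)` as soon as `artanh t ≤ t / (1 - t²)`, which holds
termwise when the series of `artanh t` is compared with the geometric series `∑ t ^ (2k + 1)`;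
what is left is the rational function `3x³ / (2 (1/4 - x²)(1 - x²)) ≥ 0`. -/

open Real Set

theorem Real.log_one_add_sub_log_one_sub_le {t : ℝ} (ht₀ : 0 ≤ t) (ht₁ : t < 1) :
    log (1 + t) - log (1 - t) ≤ 2 * t / (1 - t ^ 2) := by
  have hsq : t ^ 2 < 1 := by nlinarith
  have hgeom := (hasSum_geometric_of_lt_one (sq_nonneg t) hsq).mul_left (2 * t)
  rw [← div_eq_mul_inv] at hgeom
  refine hasSum_le (fun k => ?_) (hasSum_log_sub_log_of_abs_lt_one (by rwa [abs_of_nonneg ht₀]))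
    hgeom
  have hk : 1 / (2 * (k : ℝ) + 1) ≤ 1 := div_le_one_of_le₀ (by linarith [k.cast_nonneg (α := ℝ)])
    (by positivity)
  calc 2 * (1 / (2 * k + 1)) * t ^ (2 * k + 1) ≤ 2 * 1 * t ^ (2 * k + 1) := by gcongr
    _ = 2 * t * (t ^ 2) ^ k := by ring

theorem Real.log_add_sub_log_sub_le {a x : ℝ} (hx₀ : 0 ≤ x) (hxa : x < a) :
    log (a + x) - log (a - x) ≤ 2 * a * x / ((a + x) * (a - x)) := by
  have ha : 0 < a := hx₀.trans_lt hxa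
  have ht : x / a < 1 := (div_lt_one ha).2 hxa
  have hadd : a + x = a * (1 + x / a) := by field_simp
  have hsub : a - x = a * (1 - x / a) := by field_simp
  calc log (a + x) - log (a - x) = log (1 + x / a) - log (1 - x / a) := by
        rw [hadd, hsub, log_mul ha.ne' (by positivity), log_mul ha.ne' (by linarith)]
        ring
    _ ≤ 2 * (x / a) / (1 - (x / a) ^ 2) := log_one_add_sub_log_one_sub_le (by positivity) ht
    _ = 2 * a * x / ((a + x) * (a - x)) := by
        have : a ^ 2 - x ^ 2 ≠ 0 := by nlinarith
        rw [show (a + x) * (a - x) = a ^ 2 - x ^ 2 by ring]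
        field_simp

noncomputable def perRoundGap (x : ℝ) : ℝ :=
  log (1 - x ^ 2) - log 2 - (1 / 2 + x / 4) * log (1 / 2 + x) - (1 / 2 - x / 4) * log (1 / 2 - x)

noncomputable def perRoundGapDeriv (x : ℝ) : ℝ :=
  (1 / 2 - x / 4) / (1 / 2 - x) - (1 / 2 + x / 4) / (1 / 2 + x) - 2 * x / (1 - x ^ 2)
    - (log (1 / 2 + x) - log (1 / 2 - x)) / 4

theorem hasDerivAt_perRoundGap {x : ℝ} (hx : |x| < 1 / 2) :
    HasDerivAt perRoundGap (perRoundGapDeriv x) x := by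
  obtain ⟨hx₁, hx₂⟩ := abs_lt.1 hx
  have hp : 1 / 2 + x ≠ 0 := by linarith
  have hm : 1 / 2 - x ≠ 0 := by linarith
  have hsq : 1 - x ^ 2 ≠ 0 := by nlinarith
  have hid := hasDerivAt_id' x
  have hquarter := hid.div_const 4
  have hlog_sq := ((hasDerivAt_pow 2 x).const_sub 1).log hsq
  have hlog_p := (hid.const_add (1 / 2)).log hp
  have hlog_m := (hid.const_sub (1 / 2)).log hm
  refine ((((hlog_sq.sub_const (log 2)).sub ((hquarter.const_add (1 / 2)).mul hlog_p)).sub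
    ((hquarter.const_sub (1 / 2)).mul hlog_m))).congr_deriv ?_
  rw [perRoundGapDeriv]
  field_simp
  ring

theorem perRoundGapDeriv_nonneg {x : ℝ} (hx₀ : 0 ≤ x) (hx : x < 1 / 2) :
    0 ≤ perRoundGapDeriv x := by
  have hp : 0 < 1 / 2 + x := by linarith
  have hm : 0 < 1 / 2 - x := by linarith
  have hsq : 0 < 1 - x ^ 2 := by nlinarith
  have hp₂ : 1 + 2 * x ≠ 0 := by linarith
  have hm₂ : 1 - 2 * x ≠ 0 := by linarith
  have hlog := log_add_sub_log_sub_le hx₀ hx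
  have hrational : (1 / 2 - x / 4) / (1 / 2 - x) - (1 / 2 + x / 4) / (1 / 2 + x)
      - 2 * x / (1 - x ^ 2) - 2 * (1 / 2) * x / ((1 / 2 + x) * (1 / 2 - x)) / 4
      = 3 * x ^ 3 / (2 * (1 / 2 + x) * (1 / 2 - x) * (1 - x ^ 2)) := by
    field_simp
    ring
  have : 0 ≤ 3 * x ^ 3 / (2 * (1 / 2 + x) * (1 / 2 - x) * (1 - x ^ 2)) := by positivity
  rw [perRoundGapDeriv]
  linarith

theorem perRoundGap_zero : perRoundGap 0 = 0 := by
  simp only [perRoundGap, ne_eq, OfNat.ofNat_ne_zero, not_false_eq_true, zero_pow, sub_zero,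
    log_one, zero_sub, one_div, zero_div, add_zero, log_inv, mul_neg, sub_neg_eq_add]
  ring

theorem monotoneOn_perRoundGap : MonotoneOn perRoundGap (Ico 0 (1 / 2)) := by
  have hderiv : ∀ y ∈ Ico (0 : ℝ) (1 / 2), HasDerivAt perRoundGap (perRoundGapDeriv y) y :=
    fun y hy => hasDerivAt_perRoundGap (abs_lt.2 ⟨by linarith [hy.1], hy.2⟩)
  refine monotoneOn_of_hasDerivWithinAt_nonneg (f' := perRoundGapDeriv) (convex_Ico 0 (1 / 2))
    (fun y hy => (hderiv y hy).continuousAt.continuousWithinAt) (fun y hy => ?_) (fun y hy => ?_)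
  all_goals rw [interior_Ico] at hy
  · exact (hderiv y (Ioo_subset_Ico_self hy)).hasDerivWithinAt
  · exact perRoundGapDeriv_nonneg hy.1.le hy.2

/-- **Key per-round analytic inequality in the AdaBoost analysis.**
For `0 ≤ x < 1/2`, `2·(1/2 + x)^(1/2 + x/4)·(1/2 - x)^(1/2 - x/4) ≤ 1 - x²`,
where `a ^ b` is the real power `exp(b·ln a)` for `a > 0`. -/
theorem per_round_inequality (x : ℝ) (hx0 : 0 ≤ x) (hx : x < 1 / 2) :
    2 * (1 / 2 + x) ^ ((1 : ℝ) / 2 + x / 4) * (1 / 2 - x) ^ ((1 : ℝ) / 2 - x / 4)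
      ≤ 1 - x ^ 2 := by
  have hp : 0 < 1 / 2 + x := by linarith
  have hm : 0 < 1 / 2 - x := by linarith
  have hsq : 0 < 1 - x ^ 2 := by nlinarith
  have hgap : 0 ≤ perRoundGap x :=
    perRoundGap_zero ▸ monotoneOn_perRoundGap ⟨le_rfl, by norm_num⟩ ⟨hx0, hx⟩ hx0
  rw [← log_le_log_iff (by positivity) hsq, log_mul (by positivity) (by positivity),
    log_mul two_ne_zero (by positivity), log_rpow hp, log_rpow hm]
  unfold perRoundGap at hgap
  linarith
end

section
/- Let X be a set, let H ⊆ {−1,+1}^X have VC dimension at most d with d ≥ 1, and let T be a positive integer. Then the class sign(H^{(T)}) = {sign(g) : g = (1/T)·∑_{t=1}^T h_t with h_1,…,h_T ∈ H} has VC dimension at most 4·T·d·ln(4eT). -/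
/-- A class `G` of `±1`-valued functions on `A` shatters the finite set `s` if every
`±1` labeling of `s` is realized by some `g ∈ G`. -/
def Shatters {A : Type*} (G : Set (A → ℝ)) (s : Finset A) : Prop :=
  ∀ σ : A → Bool, ∃ g ∈ G, ∀ a ∈ s, g a = (if σ a then (1 : ℝ) else -1)

/-- `sign(t) = 1` if `t ≥ 0` and `-1` otherwise. -/
noncomputable def rsign (t : ℝ) : ℝ := if 0 ≤ t then 1 else -1

/-- The class of signs of `T`-wise averages of hypotheses from `H`. -/
noncomputable def signAvgClass {X : Type*} (H : Set (X → ℝ)) (T : ℕ) : Set (X → ℝ) :=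
  {f | ∃ h : Fin T → X → ℝ, (∀ t, h t ∈ H) ∧
    f = fun x => rsign ((1 / T : ℝ) * ∑ t, h t x)}

/-!
On a finite set `s`, an element of `sign(H^{(T)})` is determined by the restrictions to `s` of
its `T` summands, so `sign(H^{(T)})` has at most `N ^ T` restrictions to `s`, where by the
Sauer–Shelah lemma `N ≤ ∑_{i ≤ d} C(|s|, i) ≤ (e |s| / d) ^ d`. If `s` is shattered, this gives
`2 ^ |s| ≤ (e |s| / d) ^ (d T)`; taking logarithms and bounding `log` by its tangent line at
`4 e T` yields `|s| ≤ 4 T d log (4 e T)`.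
-/

open Finset Real

section Restrictions

open scoped Classical

noncomputable def pmIndicator {α : Type*} (u : Finset α) (a : α) : ℝ := if a ∈ u then 1 else -1

lemma pmIndicator_eq_one_iff {α : Type*} {u : Finset α} {a : α} :
    pmIndicator u a = 1 ↔ a ∈ u := by
  unfold pmIndicator
  split_ifs <;> norm_num [*]

lemma pmIndicator_injective {α : Type*} : Function.Injective (pmIndicator (α := α)) :=
  fun u v huv => by ext a; rw [← pmIndicator_eq_one_iff, huv, pmIndicator_eq_one_iff]

/-- For `±1`-valued `G`, these are the traces on `s` of the sets `{g = 1}`, `g ∈ G`. -/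
noncomputable def traceFamily {X : Type*} (G : Set (X → ℝ)) (s : Finset X) : Finset (Finset s) :=
  {u | pmIndicator u ∈ s.restrict '' G}

variable {X : Type*} {G : Set (X → ℝ)} {s : Finset X}

lemma Shatters.pmIndicator_mem (hs : Shatters G s) (u : Finset s) :
    pmIndicator u ∈ s.restrict '' G := by
  obtain ⟨g, hg, hgs⟩ := hs fun x => if hx : x ∈ s then decide (⟨x, hx⟩ ∈ u) else false
  refine ⟨g, hg, funext fun a => ?_⟩
  simp [Finset.restrict, pmIndicator, hgs a a.2]

lemma Shatters.two_pow_card_le_encard_image_restrict (hs : Shatters G s) :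
    (2 ^ #s : ℕ∞) ≤ (s.restrict '' G).encard :=
  calc (2 ^ #s : ℕ∞) = ENat.card (Finset s) := by simp
    _ ≤ (Set.range pmIndicator).encard := pmIndicator_injective.encard_range
    _ ≤ _ := Set.encard_le_encard (Set.range_subset_iff.2 hs.pmIndicator_mem)

lemma shatters_map_of_shatters_traceFamily {t : Finset s} (ht : (traceFamily G s).Shatters t) :
    Shatters G (t.map (Function.Embedding.subtype _)) := by
  intro σ
  obtain ⟨u, hu, htu⟩ := ht (filter_subset (fun a : s => σ a) t)
  obtain ⟨g, hg, hgu⟩ := (mem_filter.1 hu).2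
  refine ⟨g, hg, ?_⟩
  simp only [mem_map, Function.Embedding.coe_subtype, forall_exists_index, and_imp]
  rintro _ a ha rfl
  have hau : a ∈ u ↔ σ a := by
    simpa [ha] using congrArg (a ∈ ·) htu
  simpa [Finset.restrict, pmIndicator, hau] using congrFun hgu a

lemma vcDim_traceFamily_le {d : ℕ} (hG : ∀ s : Finset X, Shatters G s → #s ≤ d) :
    (traceFamily G s).vcDim ≤ d :=
  Finset.sup_le fun t ht => by
    simpa using hG _ (shatters_map_of_shatters_traceFamily (mem_shatterer.1 ht))

lemma image_restrict_subset_image_traceFamily (hpm : ∀ g ∈ G, ∀ x, g x = 1 ∨ g x = -1) :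
    s.restrict '' G ⊆ pmIndicator '' (traceFamily G s : Set (Finset s)) := by
  rintro _ ⟨g, hg, rfl⟩
  have hgu : pmIndicator ({a | g a = 1} : Finset s) = s.restrict g := by
    funext a
    rcases hpm g hg a with h | h <;> norm_num [pmIndicator, Finset.restrict, h]
  exact ⟨_, by simpa [traceFamily] using ⟨g, hg, hgu.symm⟩, hgu⟩

/-- Sauer–Shelah lemma. -/
lemma encard_image_restrict_le_sum_choose (hpm : ∀ g ∈ G, ∀ x, g x = 1 ∨ g x = -1) {d : ℕ}
    (hG : ∀ s : Finset X, Shatters G s → #s ≤ d) :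
    (s.restrict '' G).encard ≤ ∑ i ∈ Iic d, (#s).choose i :=
  calc (s.restrict '' G).encard
      ≤ (pmIndicator '' (traceFamily G s : Set (Finset s))).encard :=
        Set.encard_le_encard (image_restrict_subset_image_traceFamily hpm)
    _ ≤ #(traceFamily G s) := by
        simpa using Set.encard_image_le pmIndicator (traceFamily G s : Set (Finset s))
    _ ≤ ∑ i ∈ Iic d, (#s).choose i := by
        have := (card_le_card_shatterer (traceFamily G s)).trans card_shatterer_le_sum_vcDim
        rw [Fintype.card_coe] at this
        exact_mod_cast this.trans
          (sum_le_sum_of_subset (Iic_subset_Iic.2 (vcDim_traceFamily_le hG)))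

lemma encard_image_restrict_signAvgClass_le (H : Set (X → ℝ)) (T : ℕ) :
    (s.restrict '' signAvgClass H T).encard ≤ (s.restrict '' H).encard ^ T := by
  have hsub : s.restrict '' signAvgClass H T ⊆
      (fun f : Fin T → s → ℝ => fun a => rsign ((1 / T : ℝ) * ∑ t, f t a)) ''
        Set.univ.pi fun _ => s.restrict '' H := by
    rintro _ ⟨_, ⟨h, hH, rfl⟩, rfl⟩
    exact ⟨fun t => s.restrict (h t), fun t _ => ⟨h t, hH t, rfl⟩, rfl⟩
  calc _ ≤ _ := Set.encard_le_encard hsub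
    _ ≤ _ := Set.encard_image_le _ _
    _ = _ := by simp

end Restrictions

lemma sum_Iic_choose_le_exp_mul_div_pow {d k : ℕ} (hd : 0 < d) (hdk : d ≤ k) :
    ∑ i ∈ Iic d, (k.choose i : ℝ) ≤ (exp 1 * k / d) ^ d := by
  have hk : (0 : ℝ) < k := by exact_mod_cast hd.trans_le hdk
  set x : ℝ := d / k with hx
  have hx0 : 0 < x := by positivity
  have hx1 : x ≤ 1 := div_le_one_of_le₀ (by exact_mod_cast hdk) hk.le
  have hweighted : (∑ i ∈ Iic d, (k.choose i : ℝ)) * x ^ d ≤ exp d :=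
    calc (∑ i ∈ Iic d, (k.choose i : ℝ)) * x ^ d
        ≤ ∑ i ∈ Iic d, x ^ i * 1 ^ (k - i) * k.choose i := by
          rw [sum_mul]
          refine sum_le_sum fun i hi => ?_
          rw [one_pow, mul_one, mul_comm]
          exact mul_le_mul_of_nonneg_right (pow_le_pow_of_le_one hx0.le hx1 (mem_Iic.1 hi))
            (by positivity)
      _ ≤ ∑ i ∈ range (k + 1), x ^ i * 1 ^ (k - i) * k.choose i := by
          refine sum_le_sum_of_subset_of_nonneg (fun i hi => ?_) fun i _ _ => by positivity
          simp only [mem_Iic, mem_range] at hi ⊢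
          omega
      _ = (x + 1) ^ k := (add_pow x 1 k).symm
      _ ≤ exp x ^ k := by gcongr; exact add_one_le_exp x
      _ = exp d := by rw [← exp_nat_mul, hx, mul_div_cancel₀ _ hk.ne']
  calc ∑ i ∈ Iic d, (k.choose i : ℝ) ≤ exp d / x ^ d := (le_div_iff₀ (by positivity)).2 hweighted
    _ = (exp 1 * k / d) ^ d := by
        rw [hx, div_pow, ← exp_one_pow, div_div_eq_mul_div, div_pow, mul_pow]

lemma one_le_log_four_mul_exp_one_mul {T : ℕ} (hT : 0 < T) : 1 ≤ log (4 * exp 1 * T) := by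
  have hT1 : (1 : ℝ) ≤ T := by exact_mod_cast hT
  exact (le_log_iff_exp_le (by positivity)).2 (by nlinarith [exp_pos 1])

lemma le_four_mul_log_of_two_pow_le {k d T : ℕ} (hk : 0 < k) (hd : 0 < d) (hT : 0 < T)
    (h : (2 : ℝ) ^ k ≤ (exp 1 * k / d) ^ (d * T)) :
    (k : ℝ) ≤ 4 * T * d * log (4 * exp 1 * T) := by
  have hk' : (0 : ℝ) < k := by exact_mod_cast hk
  have hd' : (0 : ℝ) < d := by exact_mod_cast hd
  have hT' : (0 : ℝ) < T := by exact_mod_cast hT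
  set c : ℝ := 4 * exp 1 * T with hc_def
  have hlog : k * log 2 ≤ d * T * log (exp 1 * k / d) := by
    have := log_le_log (by positivity) h
    rwa [log_pow, log_pow, Nat.cast_mul] at this
  -- the tangent line of `log` at `c`, evaluated at `e k / d`
  have htangent : log (exp 1 * k / d) ≤ k / (4 * d * T) + log c - 1 := by
    have hyc : exp 1 * k / d / c = k / (4 * d * T) := by
      rw [hc_def]
      field_simp
    have := log_le_sub_one_of_pos (show 0 < exp 1 * k / d / c by positivity)
    rw [log_div (by positivity) (by positivity), hyc] at this
    linarith
  have hlog2 : (1 : ℝ) / 2 < log 2 := by linarith [log_two_gt_d9]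
  have hc : 1 ≤ log c := one_le_log_four_mul_exp_one_mul hT
  have : (d * T : ℝ) * (k / (4 * d * T)) = k / 4 := by field_simp
  nlinarith [mul_le_mul_of_nonneg_left htangent (by positivity : (0 : ℝ) ≤ d * T)]

/-- **VC dimension of signs of `T`-wise averages (Lemma 4.6).**
If `H` has VC dimension at most `d ≥ 1`, then `sign(H^{(T)})` has VC dimension at most
`4·T·d·ln(4eT)`. -/
theorem vc_of_sign_avg {X : Type*} (H : Set (X → ℝ))
    (hHpm : ∀ h ∈ H, ∀ x, h x = 1 ∨ h x = -1)
    (d : ℕ) (hd : 1 ≤ d) (hH : ∀ s : Finset X, Shatters H s → s.card ≤ d)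
    (T : ℕ) (hT : 0 < T) :
    ∀ s : Finset X, Shatters (signAvgClass H T) s →
      (s.card : ℝ) ≤ 4 * T * d * Real.log (4 * Real.exp 1 * T) := by
  intro s hs
  have hcount : (2 ^ #s : ℕ∞) ≤ (∑ i ∈ Iic d, (#s).choose i : ℕ) ^ T :=
    calc (2 ^ #s : ℕ∞) ≤ (s.restrict '' signAvgClass H T).encard :=
          hs.two_pow_card_le_encard_image_restrict
      _ ≤ (s.restrict '' H).encard ^ T := encard_image_restrict_signAvgClass_le H T
      _ ≤ _ := by gcongr; exact encard_image_restrict_le_sum_choose hHpm hH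
  rcases le_or_gt d #s with hds | hsd
  · refine le_four_mul_log_of_two_pow_le (Nat.lt_of_lt_of_le hd hds) hd hT ?_
    calc (2 : ℝ) ^ #s ≤ ((∑ i ∈ Iic d, (#s).choose i : ℕ) : ℝ) ^ T := by exact_mod_cast hcount
      _ ≤ ((exp 1 * #s / d) ^ d) ^ T := by
          push_cast
          gcongr
          exact sum_Iic_choose_le_exp_mul_div_pow hd hds
      _ = _ := (pow_mul _ _ _).symm
  · have hT1 : (1 : ℝ) ≤ T := by exact_mod_cast hT
    calc (#s : ℝ) ≤ d * 1 := by rw [mul_one]; exact_mod_cast hsd.le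
      _ ≤ d * (4 * T * log (4 * exp 1 * T)) := by
          gcongr
          nlinarith [one_le_log_four_mul_exp_one_mul hT]
      _ = 4 * T * d * log (4 * exp 1 * T) := by ring
end

section
/- Let n > 0 and let E*, G, L, a, b, c, e be nonnegative real numbers with a, b, c, e ≤ 1. Suppose: (i) e ≤ E* + 61·(G + L)/n; (ii) c ≤ e + √(4·e·L/(3n)) + 4·L/n; (iii) b ≤ c; and (iv) a ≤ b + √(36·b·(G + L)/n) + 30·(G + L)/n. Then a ≤ E* + 10·√(E*·(G + L)/n) + 182·(G + 4L)/n. -/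
private lemma chaining_key1 (E s g e l : ℝ) (hE : 0 ≤ E) (hs0 : 0 ≤ s) (hg0 : 0 ≤ g)
    (hs2 : s ^ 2 = E * g) (hel : e * l ≤ (E + 61 * g) * g) :
    4 * e * l / 3 ≤ ((6/5) * s + (91/10) * g) ^ 2 := by
  nlinarith [mul_nonneg hs0 hg0, sq_nonneg g, mul_nonneg hE hg0]

private lemma chaining_key2 (E s g b : ℝ) (hE : 0 ≤ E) (hs0 : 0 ≤ s) (hg0 : 0 ≤ g)
    (hs2 : s ^ 2 = E * g) (hbg : b * g ≤ (E + (6/5) * s + (741/10) * g) * g) :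
    36 * (b * g) ≤ ((78/10) * s + (522/10) * g) ^ 2 := by
  nlinarith [mul_nonneg hs0 hg0, sq_nonneg g, mul_nonneg hE hg0]

/-- **Deterministic chaining inequality in the generalization analysis.**
If `e ≤ E* + 61(G+L)/n`, `c ≤ e + √(4eL/(3n)) + 4L/n`, `b ≤ c`, and
`a ≤ b + √(36b(G+L)/n) + 30(G+L)/n`, with all quantities nonnegative and
`a, b, c, e ≤ 1`, then `a ≤ E* + 10√(E*(G+L)/n) + 182(G+4L)/n`. -/
theorem chaining_inequality (n : ℝ) (hn : 0 < n)
    (Estar G L a b c e : ℝ)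
    (hEstar : 0 ≤ Estar) (hG : 0 ≤ G) (hL : 0 ≤ L)
    (ha0 : 0 ≤ a) (hb0 : 0 ≤ b) (hc0 : 0 ≤ c) (he0 : 0 ≤ e)
    (ha1 : a ≤ 1) (hb1 : b ≤ 1) (hc1 : c ≤ 1) (he1 : e ≤ 1)
    (h1 : e ≤ Estar + 61 * (G + L) / n)
    (h2 : c ≤ e + Real.sqrt (4 * e * L / (3 * n)) + 4 * L / n)
    (h3 : b ≤ c)
    (h4 : a ≤ b + Real.sqrt (36 * b * (G + L) / n) + 30 * (G + L) / n) :
    a ≤ Estar + 10 * Real.sqrt (Estar * (G + L) / n) + 182 * (G + 4 * L) / n := by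
  have hn' : n ≠ 0 := ne_of_gt hn
  obtain ⟨g, hg⟩ : ∃ x : ℝ, x = (G + L) / n := ⟨_, rfl⟩
  obtain ⟨l, hl⟩ : ∃ x : ℝ, x = L / n := ⟨_, rfl⟩
  have hg0 : 0 ≤ g := by rw [hg]; positivity
  have hl0 : 0 ≤ l := by rw [hl]; positivity
  have hlg : l ≤ g := by rw [hl, hg]; gcongr; linarith
  obtain ⟨s, hs⟩ : ∃ x : ℝ, x = Real.sqrt (Estar * (G + L) / n) := ⟨_, rfl⟩
  have hs0 : 0 ≤ s := by rw [hs]; exact Real.sqrt_nonneg _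
  have hs2 : s ^ 2 = Estar * g := by
    rw [hs, Real.sq_sqrt (by positivity), hg]; ring
  have h1' : e ≤ Estar + 61 * g := by rw [hg, ← mul_div_assoc]; exact h1
  -- first sqrt bound
  have hel : e * l ≤ (Estar + 61 * g) * g :=
    calc e * l ≤ e * g := by nlinarith
      _ ≤ (Estar + 61 * g) * g := by nlinarith
  have hx1 : 4 * e * L / (3 * n) = 4 * e * l / 3 := by
    rw [hl]; field_simp
  have hsb1 : Real.sqrt (4 * e * L / (3 * n)) ≤ (6/5) * s + (91/10) * g := by
    rw [hx1]
    calc Real.sqrt (4 * e * l / 3) ≤ Real.sqrt (((6/5) * s + (91/10) * g) ^ 2) := by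
          exact Real.sqrt_le_sqrt (chaining_key1 Estar s g e l hEstar hs0 hg0 hs2 hel)
      _ = (6/5) * s + (91/10) * g := Real.sqrt_sq (by positivity)
  have h2l : (4:ℝ) * L / n = 4 * l := by rw [hl]; ring
  have hB : b ≤ Estar + (6/5) * s + (741/10) * g := by
    rw [h2l] at h2
    nlinarith [hsb1, h1', h3, hlg]
  -- second sqrt bound
  have hx2 : 36 * b * (G + L) / n = 36 * (b * g) := by
    rw [hg]; ring
  have hbg : b * g ≤ (Estar + (6/5) * s + (741/10) * g) * g := mul_le_mul_of_nonneg_right hB hg0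
  have hsb2 : Real.sqrt (36 * b * (G + L) / n) ≤ (78/10) * s + (522/10) * g := by
    rw [hx2]
    calc Real.sqrt (36 * (b * g)) ≤ Real.sqrt (((78/10) * s + (522/10) * g) ^ 2) := by
          exact Real.sqrt_le_sqrt (chaining_key2 Estar s g b hEstar hs0 hg0 hs2 hbg)
      _ = (78/10) * s + (522/10) * g := Real.sqrt_sq (by positivity)
  have h4g : (30:ℝ) * (G + L) / n = 30 * g := by rw [hg]; ring
  rw [h4g] at h4
  have htgt : 182 * (G + 4 * L) / n = 182 * g + 546 * l := by
    rw [hg, hl]; field_simp; ring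
  rw [htgt, ← hs]
  linarith [hB, hsb2, h4, hs0, hg0, hl0]
end
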